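/- Let S be a nonempty finite state space and A a nonempty finite action space, let r : S × A → ℝ be a reward function with r(s,a) ∈ [0,1] for all (s,a), and let γ ∈ [0,1) be a discount factor. Let T₁ and T₂ be two transition kernels on (S, A) that are ε-close in L1, i.e. Σ_{s'∈S} |T₁(s,a,s') − T₂(s,a,s')| ≤ ε for every (s,a) ∈ S × A. Then the optimal value functions satisfy |V*_{T₁}(s) − V*_{T₂}(s)| ≤ 2ε/(1−γ)² for every state s ∈ S, i.e. ‖V*_{T₁} − V*_{T₂}‖_∞ ≤ 2ε/(1−γ)². -/

import Mathlib

open Finset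

/-! For a fixed policy `π`, the difference `V₁ π - V₂ π` solves the Bellman equation of `T₁` with
reward `γ (T₁ - T₂) V₂ π`, whose sup norm is at most `γ ε ‖V₂ π‖ ≤ γ ε / (1 - γ)`. Since a solution
of `V = c + γ P V`, where the rows of `P` have `L1` norm at most one, has `‖V‖ ≤ ‖c‖ / (1 - γ)`,
the two values of `π` differ by at most `γ ε / (1 - γ)²`, and this bound passes to the maxima
over the finitely many policies. -/

section SupNorm

variable {S : Type*} [Fintype S]

theorem abs_sum_mul_le_sum_abs_mul_norm (d f : S → ℝ) :
    |∑ s, d s * f s| ≤ (∑ s, |d s|) * ‖f‖ := by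
  calc |∑ s, d s * f s| ≤ ∑ s, |d s| * |f s| := by
        simpa only [abs_mul] using abs_sum_le_sum_abs (fun s => d s * f s) univ
    _ ≤ ∑ s, |d s| * ‖f‖ := by
        gcongr with s
        exact norm_le_pi_norm f s
    _ = (∑ s, |d s|) * ‖f‖ := (sum_mul _ _ _).symm

theorem norm_le_of_eq_add_discounted {γ : ℝ} (hγ0 : 0 ≤ γ) (hγ1 : γ < 1)
    {P : S → S → ℝ} (hP : ∀ s, ∑ s', |P s s'| ≤ 1) {c V : S → ℝ}
    (hV : ∀ s, V s = c s + γ * ∑ s', P s s' * V s') :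
    ‖V‖ ≤ ‖c‖ / (1 - γ) := by
  have hrec : ‖V‖ ≤ ‖c‖ + γ * ‖V‖ := by
    refine (pi_norm_le_iff_of_nonneg (by positivity)).2 fun s => ?_
    have hPV : |∑ s', P s s' * V s'| ≤ ‖V‖ :=
      (abs_sum_mul_le_sum_abs_mul_norm _ V).trans
        (mul_le_of_le_one_left (norm_nonneg V) (hP s))
    calc ‖V s‖ = |c s + γ * ∑ s', P s s' * V s'| := by rw [Real.norm_eq_abs, hV s]
      _ ≤ |c s| + γ * |∑ s', P s s' * V s'| := by
        rw [← abs_of_nonneg hγ0, ← abs_mul, abs_of_nonneg hγ0]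
        exact abs_add_le _ _
      _ ≤ ‖c‖ + γ * ‖V‖ := by
        gcongr
        exact norm_le_pi_norm c s
  rw [le_div_iff₀ (by linarith)]
  linarith

theorem norm_sub_le_of_eq_add_discounted {γ ε : ℝ} (hγ0 : 0 ≤ γ) (hγ1 : γ < 1) (hε : 0 ≤ ε)
    {P₁ P₂ : S → S → ℝ} (hP₁ : ∀ s, ∑ s', |P₁ s s'| ≤ 1) (hP₂ : ∀ s, ∑ s', |P₂ s s'| ≤ 1)
    (hclose : ∀ s, ∑ s', |P₁ s s' - P₂ s s'| ≤ ε) {c V₁ V₂ : S → ℝ}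
    (hV₁ : ∀ s, V₁ s = c s + γ * ∑ s', P₁ s s' * V₁ s')
    (hV₂ : ∀ s, V₂ s = c s + γ * ∑ s', P₂ s s' * V₂ s') :
    ‖V₁ - V₂‖ ≤ γ * ε * ‖c‖ / (1 - γ) ^ 2 := by
  have h1γ : 0 < 1 - γ := by linarith
  have hV₂norm : ‖V₂‖ ≤ ‖c‖ / (1 - γ) := norm_le_of_eq_add_discounted hγ0 hγ1 hP₂ hV₂
  set e : S → ℝ := fun s => γ * ∑ s', (P₁ s s' - P₂ s s') * V₂ s'
  have hdiff : ∀ s, (V₁ - V₂) s = e s + γ * ∑ s', P₁ s s' * (V₁ - V₂) s' := by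
    intro s
    simp only [e, Pi.sub_apply, sub_mul, mul_sub, sum_sub_distrib]
    rw [hV₁ s, hV₂ s]
    ring
  have he : ‖e‖ ≤ γ * ε * (‖c‖ / (1 - γ)) := by
    refine (pi_norm_le_iff_of_nonneg (by positivity)).2 fun s => ?_
    rw [Real.norm_eq_abs, abs_mul, abs_of_nonneg hγ0, mul_assoc]
    gcongr
    exact (abs_sum_mul_le_sum_abs_mul_norm _ V₂).trans
      (mul_le_mul (hclose s) hV₂norm (norm_nonneg _) hε)
  calc ‖V₁ - V₂‖ ≤ ‖e‖ / (1 - γ) := norm_le_of_eq_add_discounted hγ0 hγ1 hP₁ hdiff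
    _ ≤ γ * ε * (‖c‖ / (1 - γ)) / (1 - γ) := by gcongr
    _ = γ * ε * ‖c‖ / (1 - γ) ^ 2 := by field_simp

end SupNorm

theorem abs_ciSup_sub_ciSup_le {ι : Type*} [Finite ι] [Nonempty ι] {f g : ι → ℝ} {C : ℝ}
    (h : ∀ i, |f i - g i| ≤ C) : |(⨆ i, f i) - ⨆ i, g i| ≤ C := by
  have hsup : ∀ {u v : ι → ℝ}, (∀ i, u i - v i ≤ C) → (⨆ i, u i) - ⨆ i, v i ≤ C :=
    fun {u v} huv => sub_le_iff_le_add.2 <| ciSup_le fun i =>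
      (sub_le_iff_le_add.1 (huv i)).trans
        (add_le_add_right (le_ciSup (Set.finite_range v).bddAbove i) C)
  exact abs_sub_le_iff.2
    ⟨hsup fun i => (abs_sub_le_iff.1 (h i)).1, hsup fun i => (abs_sub_le_iff.1 (h i)).2⟩

theorem optimal_value_diff_le_of_kernel_close_general
    {S A : Type*} [Fintype S] [Fintype A] [Nonempty A]
    (r : S → A → ℝ) (hr : ∀ s a, 0 ≤ r s a ∧ r s a ≤ 1)
    (γ : ℝ) (hγ0 : 0 ≤ γ) (hγ1 : γ < 1)
    (T₁ T₂ : S → A → S → ℝ)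
    (hT₁0 : ∀ s a s', 0 ≤ T₁ s a s') (hT₁1 : ∀ s a, ∑ s', T₁ s a s' = 1)
    (hT₂0 : ∀ s a s', 0 ≤ T₂ s a s') (hT₂1 : ∀ s a, ∑ s', T₂ s a s' = 1)
    (ε : ℝ) (hclose : ∀ s a, ∑ s', |T₁ s a s' - T₂ s a s'| ≤ ε)
    (V₁ V₂ : (S → A) → S → ℝ)
    (hV₁ : ∀ (π : S → A) (s : S),
      V₁ π s = r s (π s) + γ * ∑ s', T₁ s (π s) s' * V₁ π s')
    (hV₂ : ∀ (π : S → A) (s : S),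
      V₂ π s = r s (π s) + γ * ∑ s', T₂ s (π s) s' * V₂ π s')
    (Vstar₁ Vstar₂ : S → ℝ)
    (hVstar₁ : ∀ s, Vstar₁ s = ⨆ π : S → A, V₁ π s)
    (hVstar₂ : ∀ s, Vstar₂ s = ⨆ π : S → A, V₂ π s) :
    ∀ s, |Vstar₁ s - Vstar₂ s| ≤ 2 * ε / (1 - γ) ^ 2 := by
  intro s
  have hε : 0 ≤ ε :=
    (sum_nonneg fun _ _ => abs_nonneg _).trans (hclose s (Classical.arbitrary A))
  have hT₁ : ∀ s a, ∑ s', |T₁ s a s'| ≤ 1 := fun s a => by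
    simp_rw [abs_of_nonneg (hT₁0 s a _), hT₁1, le_refl]
  have hT₂ : ∀ s a, ∑ s', |T₂ s a s'| ≤ 1 := fun s a => by
    simp_rw [abs_of_nonneg (hT₂0 s a _), hT₂1, le_refl]
  have hpolicy : ∀ π : S → A, |V₁ π s - V₂ π s| ≤ 2 * ε / (1 - γ) ^ 2 := fun π => by
    have hr_norm : ‖fun s => r s (π s)‖ ≤ 1 :=
      (pi_norm_le_iff_of_nonneg zero_le_one).2 fun s => by
        rw [Real.norm_eq_abs, abs_le]
        constructor <;> linarith [hr s (π s)]
    have hsim := norm_sub_le_of_eq_add_discounted hγ0 hγ1 hε (fun s => hT₁ s (π s))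
      (fun s => hT₂ s (π s)) (fun s => hclose s (π s)) (hV₁ π) (hV₂ π)
    calc |V₁ π s - V₂ π s| ≤ ‖V₁ π - V₂ π‖ := norm_le_pi_norm (V₁ π - V₂ π) s
      _ ≤ γ * ε * ‖fun s => r s (π s)‖ / (1 - γ) ^ 2 := hsim
      _ ≤ 2 * ε / (1 - γ) ^ 2 := by
        have : γ * ε * ‖fun s => r s (π s)‖ ≤ 1 * ε * 1 := by gcongr
        exact div_le_div_of_nonneg_right (by linarith) (by positivity)
  rw [hVstar₁, hVstar₂]
  exact abs_ciSup_sub_ciSup_le hpolicy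

/-- **Optimal value-function perturbation bound.**
If two transition kernels `T₁`, `T₂` on a finite MDP with rewards in `[0,1]` and discount
`γ ∈ [0,1)` are `ε`-close in `L1` for every state-action pair, then the optimal value
functions (pointwise suprema over deterministic stationary policies of the value functions,
each characterised by its Bellman equation) satisfy
`|V*₁ s - V*₂ s| ≤ 2ε / (1 - γ)²` for every state `s`. -/
theorem optimal_value_diff_le_of_kernel_close
    {S A : Type*} [Fintype S] [Nonempty S] [Fintype A] [Nonempty A]
    (r : S → A → ℝ) (hr : ∀ s a, 0 ≤ r s a ∧ r s a ≤ 1)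
    (γ : ℝ) (hγ0 : 0 ≤ γ) (hγ1 : γ < 1)
    (T₁ T₂ : S → A → S → ℝ)
    (hT₁0 : ∀ s a s', 0 ≤ T₁ s a s') (hT₁1 : ∀ s a, ∑ s', T₁ s a s' = 1)
    (hT₂0 : ∀ s a s', 0 ≤ T₂ s a s') (hT₂1 : ∀ s a, ∑ s', T₂ s a s' = 1)
    (ε : ℝ) (hclose : ∀ s a, ∑ s', |T₁ s a s' - T₂ s a s'| ≤ ε)
    (V₁ V₂ : (S → A) → S → ℝ)
    (hV₁ : ∀ (π : S → A) (s : S),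
      V₁ π s = r s (π s) + γ * ∑ s', T₁ s (π s) s' * V₁ π s')
    (hV₂ : ∀ (π : S → A) (s : S),
      V₂ π s = r s (π s) + γ * ∑ s', T₂ s (π s) s' * V₂ π s')
    (Vstar₁ Vstar₂ : S → ℝ)
    (hVstar₁ : ∀ s, Vstar₁ s = ⨆ π : S → A, V₁ π s)
    (hVstar₂ : ∀ s, Vstar₂ s = ⨆ π : S → A, V₂ π s) :
    ∀ s, |Vstar₁ s - Vstar₂ s| ≤ 2 * ε / (1 - γ) ^ 2 :=
  optimal_value_diff_le_of_kernel_close_general r hr γ hγ0 hγ1 T₁ T₂ hT₁0 hT₁1 hT₂0 hT₂1 ε hclose V₁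
    V₂ hV₁ hV₂ Vstar₁ Vstar₂ hVstar₁ hVstar₂
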